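/- Suppose F^{(i)}_{(1)1} = Γ^i_{pq}(t,x)x₁^p x₁^q − H¹₁₁(t)x₁^i with Γ symmetric in p,q, and suppose the second h-KCC-invariant P^i_{j11} vanishes identically in x₁ ∈ ℝⁿ. Then Γ^i_{pq} is independent of t (∂Γ^i_{pq}/∂t = 0) and its curvature satisfies the symmetrization identity 𝔯^i_{pqj} + 𝔯^i_{qpj} = 0, where 𝔯^i_{pqj} = ∂Γ^i_{pq}/∂x^j − ∂Γ^i_{pj}/∂x^q + Γ^r_{pq}Γ^i_{rj} − Γ^r_{pj}Γ^i_{rq}. -/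

import Mathlib

noncomputable section

/-- Partial derivative of `f` with respect to the `j`-th coordinate at `x`. -/
def pd {n : ℕ} (f : (Fin n → ℝ) → ℝ) (x : Fin n → ℝ) (j : Fin n) : ℝ :=
  deriv (fun s => f (Function.update x j s)) (x j)

/-- The first h-KCC-invariant
`ε^{(i)}_{(1)1} = −F^{(i)} + (1/2)(∂F^{(i)}/∂x₁^r) x₁^r − (1/2) H¹₁₁ x₁^i`. -/
def eps {n : ℕ} (F : ℝ → (Fin n → ℝ) → (Fin n → ℝ) → Fin n → ℝ) (H : ℝ → ℝ)
    (t : ℝ) (x v : Fin n → ℝ) (i : Fin n) : ℝ :=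
  -F t x v i + (1 / 2) * ∑ r, pd (fun w => F t x w i) v r * v r
    - (1 / 2) * H t * v i

/-- The second h-KCC-invariant (jet h-deviation curvature tensor) `P^i_{j11}`. -/
def Pdev {n : ℕ} (F : ℝ → (Fin n → ℝ) → (Fin n → ℝ) → Fin n → ℝ) (H : ℝ → ℝ)
    (t : ℝ) (x v : Fin n → ℝ) (i j : Fin n) : ℝ :=
  -pd (fun y => F t y v i) x j
    + (1 / 2) * deriv (fun s => pd (fun w => F s x w i) v j) t
    + (1 / 2) * ∑ r, pd (fun y => pd (fun w => F t y w i) v j) x r * v r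
    - (1 / 2) * ∑ r, pd (fun w => pd (fun w' => F t x w' i) w j) v r * F t x v r
    + (1 / 4) * ∑ r, pd (fun w => F t x w i) v r * pd (fun w => F t x w r) v j
    + (1 / 2) * deriv H t * (if i = j then (1 : ℝ) else 0)
    - (1 / 4) * (H t) ^ 2 * (if i = j then (1 : ℝ) else 0)

/-- The third h-KCC-invariant
`R^i_{jk1} = (1/3)[∂P^i_{j11}/∂x₁^k − ∂P^i_{k11}/∂x₁^j]`. -/
def Rcurv {n : ℕ} (F : ℝ → (Fin n → ℝ) → (Fin n → ℝ) → Fin n → ℝ) (H : ℝ → ℝ)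
    (t : ℝ) (x v : Fin n → ℝ) (i j k : Fin n) : ℝ :=
  (1 / 3) * (pd (fun w => Pdev F H t x w i j) v k
    - pd (fun w => Pdev F H t x w i k) v j)

/-- The fourth h-KCC-invariant `B^i_{jkm} = ∂R^i_{jk1}/∂x₁^m`. -/
def Bcurv {n : ℕ} (F : ℝ → (Fin n → ℝ) → (Fin n → ℝ) → Fin n → ℝ) (H : ℝ → ℝ)
    (t : ℝ) (x v : Fin n → ℝ) (i j k m : Fin n) : ℝ :=
  pd (fun w => Rcurv F H t x w i j k) v m

/-- The fifth h-KCC-invariant `D^{i1}_{jkm} = ∂³F^{(i)}/∂x₁^j∂x₁^k∂x₁^m`. -/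
def Dtens {n : ℕ} (F : ℝ → (Fin n → ℝ) → (Fin n → ℝ) → Fin n → ℝ)
    (t : ℝ) (x v : Fin n → ℝ) (i j k m : Fin n) : ℝ :=
  pd (fun w => pd (fun w' => pd (fun w'' => F t x w'' i) w' j) w k) v m

/-- The curvature tensor of a (time-independent) symmetric linear connection:
`𝔯^i_{pqj} = ∂Γ^i_{pq}/∂x^j − ∂Γ^i_{pj}/∂x^q + Γ^r_{pq}Γ^i_{rj} − Γ^r_{pj}Γ^i_{rq}`. -/
def curv {n : ℕ} (Γ : (Fin n → ℝ) → Fin n → Fin n → Fin n → ℝ)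
    (x : Fin n → ℝ) (i p q j : Fin n) : ℝ :=
  pd (fun y => Γ y i p q) x j - pd (fun y => Γ y i p j) x q
    + ∑ r, Γ x r p q * Γ x i r j - ∑ r, Γ x r p j * Γ x i r q

/-- Smoothness of a local object on the 1-jet space. -/
def SmoothJet {n : ℕ} (G : ℝ → (Fin n → ℝ) → (Fin n → ℝ) → Fin n → ℝ) : Prop :=
  ContDiff ℝ (⊤ : ℕ∞) (fun p : ℝ × (Fin n → ℝ) × (Fin n → ℝ) => G p.1 p.2.1 p.2.2)

/-- The curvature of a time-dependent symmetric connection `Γ^i_{pq}(t,x)`. -/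
def curvT {n : ℕ} (Γ : ℝ → (Fin n → ℝ) → Fin n → Fin n → Fin n → ℝ)
    (t : ℝ) (x : Fin n → ℝ) (i p q j : Fin n) : ℝ :=
  pd (fun y => Γ t y i p q) x j - pd (fun y => Γ t y i p j) x q
    + ∑ r, Γ t x r p q * Γ t x i r j - ∑ r, Γ t x r p j * Γ t x i r q

variable {n : ℕ}

lemma hasDerivAt_update_apply (v : Fin n → ℝ) (j p : Fin n) (s : ℝ) :
    HasDerivAt (fun s => Function.update v j s p) (if p = j then 1 else 0) s := by
  simp only [Function.update_apply]
  by_cases h : p = j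
  · simpa [h] using hasDerivAt_id' s
  · simpa [h] using hasDerivAt_const s (v p)

lemma pd_quad (A : Fin n → Fin n → ℝ) (c : ℝ) (v : Fin n → ℝ) (i j : Fin n) :
    pd (fun w => (∑ p, ∑ q, A p q * w p * w q) - c * w i) v j
      = (∑ q, A j q * v q) + (∑ p, A p j * v p) - c * (if i = j then 1 else 0) := by
  unfold pd
  have h : ∀ p q : Fin n,
      HasDerivAt (fun s => A p q * Function.update v j s p * Function.update v j s q)
        (A p q * ((if p = j then (1:ℝ) else 0) * v q + v p * (if q = j then 1 else 0))) (v j) := by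
    intro p q
    have h1 := hasDerivAt_update_apply v j p (v j)
    have h2 := hasDerivAt_update_apply v j q (v j)
    have := (h1.const_mul (A p q)).mul h2
    simp only [Function.update_eq_self] at this
    exact this.congr_deriv (by ring)
  have hb : HasDerivAt (fun s => (∑ p, ∑ q, A p q * Function.update v j s p * Function.update v j s q) - c * Function.update v j s i)
      ((∑ p, ∑ q, A p q * ((if p = j then (1:ℝ) else 0) * v q + v p * (if q = j then 1 else 0))) - c * (if i = j then 1 else 0)) (v j) := by
    exact (HasDerivAt.fun_sum (fun p _ => HasDerivAt.fun_sum (fun q _ => h p q))).sub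
      ((hasDerivAt_update_apply v j i (v j)).const_mul c)
  rw [hb.deriv]
  congr 1
  simp only [mul_add, Finset.sum_add_distrib, mul_ite, ite_mul, mul_one, mul_zero, zero_mul]
  simp [Finset.sum_ite_irrel, Finset.sum_ite_eq', mul_comm]

lemma pd_linear (B : Fin n → ℝ) (c : ℝ) (v : Fin n → ℝ) (r : Fin n) :
    pd (fun w => (∑ p, B p * w p) + c) v r = B r := by
  unfold pd
  have hb : HasDerivAt (fun s => (∑ p, B p * Function.update v r s p) + c)
      (∑ p, B p * (if p = r then (1:ℝ) else 0)) (v r) :=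
    (HasDerivAt.fun_sum (fun p _ => (hasDerivAt_update_apply v r p (v r)).const_mul (B p))).add_const c
  rw [hb.deriv]
  simp [Finset.sum_ite_eq', mul_comm]

lemma pd_sub_const (f : (Fin n → ℝ) → ℝ) (c : ℝ) (x : Fin n → ℝ) (j : Fin n) :
    pd (fun y => f y - c) x j = pd f x j := by
  unfold pd; exact deriv_sub_const c

lemma pd_sum (f : Fin n → (Fin n → ℝ) → ℝ) (x : Fin n → ℝ) (j : Fin n)
    (h : ∀ p, DifferentiableAt ℝ (fun s => f p (Function.update x j s)) (x j)) :
    pd (fun y => ∑ p, f p y) x j = ∑ p, pd (f p) x j := by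
  unfold pd
  exact deriv_fun_sum (fun p _ => h p)

lemma pd_mul_const (f : (Fin n → ℝ) → ℝ) (c : ℝ) (x : Fin n → ℝ) (j : Fin n) :
    pd (fun y => f y * c) x j = pd f x j * c := by
  unfold pd
  simp only [← deriv_mul_const_field]

lemma pd_add (f g : (Fin n → ℝ) → ℝ) (x : Fin n → ℝ) (j : Fin n)
    (hf : DifferentiableAt ℝ (fun s => f (Function.update x j s)) (x j))
    (hg : DifferentiableAt ℝ (fun s => g (Function.update x j s)) (x j)) :
    pd (fun y => f y + g y) x j = pd f x j + pd g x j := by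
  unfold pd; exact deriv_add hf hg

lemma pd_lsum (B : (Fin n → ℝ) → Fin n → ℝ) (x : Fin n → ℝ) (j : Fin n)
    (hB : ∀ p, DifferentiableAt ℝ (fun s => B (Function.update x j s) p) (x j))
    (v : Fin n → ℝ) :
    pd (fun y => ∑ p, B y p * v p) x j = ∑ p, pd (fun y => B y p) x j * v p := by
  rw [pd_sum (fun p y => B y p * v p) x j (fun p => (hB p).mul_const (v p))]
  exact Finset.sum_congr rfl fun p _ => pd_mul_const _ _ _ _

lemma pd_qsum (A : (Fin n → ℝ) → Fin n → Fin n → ℝ) (x : Fin n → ℝ) (j : Fin n)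
    (hA : ∀ p q, DifferentiableAt ℝ (fun s => A (Function.update x j s) p q) (x j))
    (v : Fin n → ℝ) :
    pd (fun y => ∑ p, ∑ q, A y p q * v p * v q) x j
      = ∑ p, ∑ q, pd (fun y => A y p q) x j * v p * v q := by
  rw [pd_sum (fun p y => ∑ q, A y p q * v p * v q) x j
      (fun p => DifferentiableAt.fun_sum fun q _ => ((hA p q).mul_const (v p)).mul_const (v q))]
  refine Finset.sum_congr rfl fun p _ => ?_
  rw [pd_sum (fun q y => A y p q * v p * v q) x j
      (fun q => ((hA p q).mul_const (v p)).mul_const (v q))]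
  refine Finset.sum_congr rfl fun q _ => ?_
  rw [pd_mul_const, pd_mul_const]


lemma Pdev_closed (Γ : ℝ → (Fin n → ℝ) → Fin n → Fin n → Fin n → ℝ) (H : ℝ → ℝ)
    (hΓ : ∀ i p q, ContDiff ℝ (⊤ : ℕ∞) fun z : ℝ × (Fin n → ℝ) => Γ z.1 z.2 i p q)
    (hH : ContDiff ℝ (⊤ : ℕ∞) H)
    (t : ℝ) (x v : Fin n → ℝ) (i j : Fin n) :
    Pdev (fun s y w i' => (∑ p, ∑ q, Γ s y i' p q * w p * w q) - H s * w i') H t x v i j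
    = -(∑ p, ∑ q, pd (fun y => Γ t y i p q) x j * v p * v q)
      + (1/2) * ((∑ q, deriv (fun s => Γ s x i j q) t * v q)
          + (∑ p, deriv (fun s => Γ s x i p j) t * v p)
          - deriv H t * (if i = j then 1 else 0))
      + (1/2) * ∑ r, ((∑ q, pd (fun y => Γ t y i j q) x r * v q)
          + (∑ p, pd (fun y => Γ t y i p j) x r * v p)) * v r
      - (1/2) * ∑ r, (Γ t x i j r + Γ t x i r j)
          * ((∑ p, ∑ q, Γ t x r p q * v p * v q) - H t * v r)
      + (1/4) * ∑ r, ((∑ q, Γ t x i r q * v q) + (∑ p, Γ t x i p r * v p)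
            - H t * (if i = r then 1 else 0))
          * ((∑ q, Γ t x r j q * v q) + (∑ p, Γ t x r p j * v p)
            - H t * (if r = j then 1 else 0))
      + (1/2) * deriv H t * (if i = j then 1 else 0)
      - (1/4) * (H t)^2 * (if i = j then 1 else 0) := by
  have hdt : ∀ (x : Fin n → ℝ) i p q, Differentiable ℝ (fun s => Γ s x i p q) :=
    fun x i p q => ((hΓ i p q).comp (contDiff_id.prodMk contDiff_const)).differentiable (by simp)
  have hdx : ∀ (t : ℝ) (x : Fin n → ℝ) (j : Fin n) i p q,
      Differentiable ℝ (fun s => Γ t (Function.update x j s) i p q) :=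
    fun t x j i p q => ((hΓ i p q).comp
      (contDiff_const.prodMk (contDiff_update _ x j))).differentiable (by simp)
  have hHd : Differentiable ℝ H := hH.differentiable (by simp)
  unfold Pdev
  -- term 1
  have h1 : pd (fun y => (∑ p, ∑ q, Γ t y i p q * v p * v q) - H t * v i) x j
      = ∑ p, ∑ q, pd (fun y => Γ t y i p q) x j * v p * v q := by
    rw [pd_sub_const, pd_qsum (fun y p q => Γ t y i p q) x j
      (fun p q => (hdx t x j i p q).differentiableAt)]
  -- inner v-derivative, closed form at every (s, y)
  have hin : ∀ (s : ℝ) (y : Fin n → ℝ),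
      pd (fun w => (∑ p, ∑ q, Γ s y i p q * w p * w q) - H s * w i) v j
      = (∑ q, Γ s y i j q * v q) + (∑ p, Γ s y i p j * v p)
        - H s * (if i = j then 1 else 0) :=
    fun s y => pd_quad (Γ s y i) (H s) v i j
  -- term 2
  have h2 : deriv (fun s => pd (fun w => (∑ p, ∑ q, Γ s x i p q * w p * w q) - H s * w i) v j) t
      = (∑ q, deriv (fun s => Γ s x i j q) t * v q)
        + (∑ p, deriv (fun s => Γ s x i p j) t * v p)
        - deriv H t * (if i = j then 1 else 0) := by
    have : (fun s => pd (fun w => (∑ p, ∑ q, Γ s x i p q * w p * w q) - H s * w i) v j)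
        = fun s => ((∑ q, Γ s x i j q * v q) + (∑ p, Γ s x i p j * v p))
          - H s * (if i = j then 1 else 0) := funext fun s => hin s x
    rw [this]
    have d1 : DifferentiableAt ℝ (fun s => ∑ q, Γ s x i j q * v q) t :=
      DifferentiableAt.fun_sum fun q _ => ((hdt x i j q) t).mul_const _
    have d2 : DifferentiableAt ℝ (fun s => ∑ p, Γ s x i p j * v p) t :=
      DifferentiableAt.fun_sum fun p _ => ((hdt x i p j) t).mul_const _
    rw [deriv_fun_sub (d1.fun_add d2) ((hHd t).mul_const _), deriv_fun_add d1 d2,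
      deriv_fun_sum (fun q _ => ((hdt x i j q) t).mul_const _),
      deriv_fun_sum (fun p _ => ((hdt x i p j) t).mul_const _), deriv_mul_const_field]
    congr 1
    · congr 1 <;> exact Finset.sum_congr rfl fun _ _ => deriv_mul_const_field _
  -- term 3
  have h3 : ∀ r, pd (fun y => (∑ q, Γ t y i j q * v q) + (∑ p, Γ t y i p j * v p)
        - H t * (if i = j then 1 else 0)) x r
      = (∑ q, pd (fun y => Γ t y i j q) x r * v q) + (∑ p, pd (fun y => Γ t y i p j) x r * v p) := by
    intro r
    rw [pd_sub_const, pd_add (fun y => ∑ q, Γ t y i j q * v q)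
      (fun y => ∑ p, Γ t y i p j * v p) x r
      (DifferentiableAt.fun_sum fun q _ => ((hdx t x r i j q) _).mul_const _)
      (DifferentiableAt.fun_sum fun p _ => ((hdx t x r i p j) _).mul_const _),
      pd_lsum (fun y q => Γ t y i j q) x r (fun q => (hdx t x r i j q) _) v,
      pd_lsum (fun y p => Γ t y i p j) x r (fun p => (hdx t x r i p j) _) v]
  -- term 4
  have h4 : ∀ r, pd (fun w => (∑ q, Γ t x i j q * w q) + (∑ p, Γ t x i p j * w p)
        - H t * (if i = j then 1 else 0)) v r
      = Γ t x i j r + Γ t x i r j := by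
    intro r
    have e : (fun w : Fin n → ℝ => (∑ q, Γ t x i j q * w q) + (∑ p, Γ t x i p j * w p)
          - H t * (if i = j then 1 else 0))
        = fun w => (∑ p, (Γ t x i j p + Γ t x i p j) * w p)
            + (- (H t * (if i = j then 1 else 0))) := by
      funext w
      have : ∑ p, (Γ t x i j p + Γ t x i p j) * w p
          = (∑ q, Γ t x i j q * w q) + ∑ p, Γ t x i p j * w p := by
        rw [← Finset.sum_add_distrib]
        exact Finset.sum_congr rfl fun p _ => by ring
      rw [this]; ring
    rw [e, pd_linear]
  rw [h1, h2]
  simp only [pd_quad]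
  simp only [h3, h4]


lemma poly_vanish (c0 : ℝ) (L : Fin n → ℝ) (Q : Fin n → Fin n → ℝ)
    (h : ∀ v : Fin n → ℝ, c0 + (∑ p, L p * v p) + (∑ p, ∑ q, Q p q * v p * v q) = 0) :
    (∀ p, L p = 0) ∧ (∀ p q, Q p q + Q q p = 0) := by
  have h0 : c0 = 0 := by have := h 0; simpa using this
  have hsingle : ∀ p : Fin n, c0 + L p + Q p p = 0 := by
    intro p
    have := h (fun r => if r = p then 1 else 0)
    simpa [mul_ite, ite_mul, Finset.sum_ite_eq', Finset.sum_ite_irrel] using this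
  have hsingle' : ∀ p : Fin n, c0 - L p + Q p p = 0 := by
    intro p
    have := h (fun r => if r = p then (-1 : ℝ) else 0)
    simp [mul_ite, ite_mul, Finset.sum_ite_eq', Finset.sum_ite_irrel] at this
    linarith
  have hL : ∀ p, L p = 0 := fun p => by have := hsingle p; have := hsingle' p; linarith
  refine ⟨hL, fun p q => ?_⟩
  have hpq := h (fun r => (if r = p then 1 else 0) + (if r = q then 1 else 0))
  simp only [mul_add, add_mul, mul_ite, ite_mul, mul_one, mul_zero, one_mul, zero_mul,
    Finset.sum_add_distrib, Finset.sum_ite_eq', Finset.sum_ite_irrel, Finset.mem_univ,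
    if_true] at hpq
  have e1 := hsingle p
  have e2 := hsingle q
  have l1 := hL p
  have l2 := hL q
  linarith

set_option maxHeartbeats 4000000 in
/-- If `F^{(i)} = Γ^i_{pq}(t,x) x₁^p x₁^q − H¹₁₁(t) x₁^i` and the second h-KCC-invariant
vanishes identically, then `Γ` is independent of `t` and its curvature satisfies
`𝔯^i_{pqj} + 𝔯^i_{qpj} = 0`. -/
theorem vanishing_deviation_curvature_constraints {n : ℕ}
    (Γ : ℝ → (Fin n → ℝ) → Fin n → Fin n → Fin n → ℝ) (H : ℝ → ℝ)
    (hΓ : ∀ i p q, ContDiff ℝ (⊤ : ℕ∞) (fun z : ℝ × (Fin n → ℝ) => Γ z.1 z.2 i p q))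
    (hH : ContDiff ℝ (⊤ : ℕ∞) H)
    (hsym : ∀ t x i p q, Γ t x i p q = Γ t x i q p)
    (hP : ∀ (t : ℝ) (x v : Fin n → ℝ) (i j : Fin n),
      Pdev (fun s y w i' => (∑ p, ∑ q, Γ s y i' p q * w p * w q) - H s * w i')
        H t x v i j = 0) :
    (∀ t x i p q, deriv (fun s => Γ s x i p q) t = 0) ∧
    (∀ t x i p q j, curvT Γ t x i p q j + curvT Γ t x i q p j = 0) := by
  
  have hE := fun (t : ℝ) (x : Fin n → ℝ) (i j : Fin n) (v : Fin n → ℝ) =>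
    (Pdev_closed Γ H hΓ hH t x v i j).symm.trans (hP t x v i j)
  have hdt0 : ∀ (t : ℝ) (x : Fin n → ℝ) (i p q : Fin n),
      deriv (fun s => Γ s x i p q) t = 0 := by
    intro t x i p q
    have I1 := hE t x i q (fun r => if r = p then (1:ℝ) else 0)
    have I2 := hE t x i q (fun r => if r = p then (-1:ℝ) else 0)
    simp only [mul_ite, ite_mul, mul_one, mul_zero, one_mul, zero_mul, mul_neg, neg_mul,
      Finset.sum_ite_eq, Finset.sum_ite_eq', Finset.sum_ite_irrel, Finset.mem_univ, if_true, mul_sub, sub_mul,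
      mul_add, add_mul, Finset.sum_add_distrib, Finset.sum_sub_distrib, neg_neg,
      Finset.sum_neg_distrib] at I1 I2
    have hsymDt : deriv (fun s => Γ s x i q p) t = deriv (fun s => Γ s x i p q) t := by
      exact congrArg (fun f => deriv f t) (funext fun s => hsym s x i q p)
    linarith [I1, I2, hsymDt]
  refine ⟨hdt0, ?_⟩
  intro t x i p q j
  have I3 := hE t x i j (fun r => (if r = p then (1:ℝ) else 0) + (if r = q then 1 else 0))
  have I4 := hE t x i j (fun r => if r = p then (1:ℝ) else 0)
  have I5 := hE t x i j (fun r => if r = q then (1:ℝ) else 0)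
  simp only [hdt0, mul_ite, ite_mul, mul_one, mul_zero, one_mul, zero_mul, mul_neg, neg_mul,
    Finset.sum_ite_eq, Finset.sum_ite_eq', Finset.sum_ite_irrel, Finset.mem_univ, if_true,
    mul_sub, sub_mul, mul_add, add_mul, Finset.sum_add_distrib, Finset.sum_sub_distrib,
    neg_neg, zero_add, add_zero, zero_sub, sub_zero] at I3 I4 I5
  have hG : ∀ a b c, Γ t x a b c = Γ t x a c b := fun a b c => hsym t x a b c
  have pdsym : ∀ (r a b : Fin n), pd (fun y => Γ t y i a b) x r = pd (fun y => Γ t y i b a) x r :=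
    fun r a b => congrArg (fun f => pd f x r) (funext fun y => hsym t y i a b)
  have S1 : ∀ a b : Fin n, (∑ x1, Γ t x i j x1 * Γ t x x1 a b)
      = ∑ x1, Γ t x i x1 j * Γ t x x1 a b :=
    fun a b => Finset.sum_congr rfl fun x1 _ => by rw [hG i j x1]
  have S5 : ∀ a b : Fin n, (∑ x1, Γ t x i x1 j * Γ t x x1 a b)
      = ∑ x1, Γ t x i x1 j * Γ t x x1 b a :=
    fun a b => Finset.sum_congr rfl fun x1 _ => by rw [hG x1 a b]
  have S3 : ∀ a b : Fin n, (∑ x1, Γ t x i x1 a * Γ t x x1 b j)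
      = ∑ x1, Γ t x i a x1 * Γ t x x1 b j :=
    fun a b => Finset.sum_congr rfl fun x1 _ => by rw [hG i x1 a]
  have S4 : ∀ a b : Fin n, (∑ x1, Γ t x i a x1 * Γ t x x1 j b)
      = ∑ x1, Γ t x i a x1 * Γ t x x1 b j :=
    fun a b => Finset.sum_congr rfl fun x1 _ => by rw [hG x1 j b]
  have M1 : ∀ a b : Fin n, (∑ x1, Γ t x i x1 a * Γ t x x1 j b)
      = ∑ x1, Γ t x i a x1 * Γ t x x1 b j :=
    fun a b => Finset.sum_congr rfl fun x1 _ => by rw [hG i x1 a, hG x1 j b]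
  have M2 : ∀ a b : Fin n, (∑ x1, Γ t x i x1 a * Γ t x x1 b j)
      = ∑ x1, Γ t x i a x1 * Γ t x x1 b j :=
    fun a b => Finset.sum_congr rfl fun x1 _ => by rw [hG i x1 a]
  have M3 : ∀ a b : Fin n, (∑ x1, Γ t x i a x1 * Γ t x x1 j b)
      = ∑ x1, Γ t x i a x1 * Γ t x x1 b j :=
    fun a b => Finset.sum_congr rfl fun x1 _ => by rw [hG x1 j b]
  have B1 : ∀ a b : Fin n, (∑ r, Γ t x r a b * Γ t x i r j)
      = ∑ x1, Γ t x i x1 j * Γ t x x1 a b :=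
    fun a b => Finset.sum_congr rfl fun x1 _ => by ring
  have B2 : ∀ a b : Fin n, (∑ r, Γ t x r a j * Γ t x i r b)
      = ∑ x1, Γ t x i b x1 * Γ t x x1 a j :=
    fun a b => Finset.sum_congr rfl fun x1 _ => by rw [hG i x1 b]; ring
  simp only [pow_two] at I3 I4 I5
  unfold curvT
  linarith [I3, I4, I5, pdsym j p q, pdsym q j p, pdsym p j q, pdsym j q p,
    S1 p q, S1 q p, S1 p p, S1 q q, S5 p q, S5 q p,
    M1 p q, M1 q p, M1 p p, M1 q q, M2 p q, M2 q p, M2 p p, M2 q q,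
    M3 p q, M3 q p, M3 p p, M3 q q, B1 p q, B1 q p, B2 p q, B2 q p,
    hG i p q, hG i p j, hG i q j, hG i j p, hG i j q]
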